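/- arXiv:2011.03373 — 2 statements merged into one kernel-verified Lean document; each statement's English description precedes it below -/
import Mathlib

section
/- There exist elements x, y, z of PSL(2,𝔽₇) with orderOf(x) = 2, orderOf(y) = 4, orderOf(z) = 7, x·y·z = 1, and such that {x, y, z} generates PSL(2,𝔽₇); that is, (0; 2, 4, 7) is a signature of PSL(2,𝔽₇). -/
/-
Lift to `SL(2, 𝔽₇)` the elements `x = [[0, 1], [-1, 0]]`, `y = [[0, 1], [-1, 3]]` and
`z = -[[1, 3], [0, 1]]`, so that `x y z = 1`. The orders of their images in `PSL(2, 𝔽₇)` are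
read off from the first power landing in the centre `{±1}`. Up to sign, `z⁵` is the upper
elementary transvection, and conjugating its inverse by `x` gives the lower one; since the two
elementary transvections generate `SL(2, 𝔽_p)`, so do `x` and `z`, hence also their images.
-/

open MatrixGroups

namespace Matrix

namespace SpecialLinearGroup

lemma transvection_pow {ι F : Type*} [DecidableEq ι] [Fintype ι] [CommRing F] {i j : ι}
    (hij : i ≠ j) (b : F) (n : ℕ) : transvection hij b ^ n = transvection hij (n * b) := by
  induction n with
  | zero => simp [transvection_coeff_zero]
  | succ n ih => rw [pow_succ, ih, ← transvection_add, Nat.cast_succ, add_one_mul]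

end SpecialLinearGroup

lemma SL2.closure_transvection_one_eq_top (p : ℕ) [Fact p.Prime] :
    Subgroup.closure {(SpecialLinearGroup.transvection zero_ne_one 1 : SL(2, ZMod p)),
      SpecialLinearGroup.transvection one_ne_zero 1} = ⊤ := by
  refine (Subgroup.eq_top_iff' _).2
    (SL2.transvection_induction _ (fun i j hij c => ?_) fun _ _ => mul_mem)
  rw [← ZMod.natCast_zmod_val c, ← mul_one (c.val : ZMod p),
    ← SpecialLinearGroup.transvection_pow]
  refine pow_mem (Subgroup.subset_closure ?_) _
  fin_cases i <;> fin_cases j <;> simp at hij ⊢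

end Matrix

lemma QuotientGroup.orderOf_mk_eq_prime_pow {G : Type*} [Group G] {N : Subgroup G} [N.Normal]
    {g : G} {p k : ℕ} [Fact p.Prime] (hnot : g ^ p ^ k ∉ N) (hmem : g ^ p ^ (k + 1) ∈ N) :
    orderOf (g : G ⧸ N) = p ^ (k + 1) :=
  orderOf_eq_prime_pow (by rwa [← QuotientGroup.mk_pow, QuotientGroup.eq_one_iff])
    (by rwa [← QuotientGroup.mk_pow, QuotientGroup.eq_one_iff])

lemma QuotientGroup.closure_image_mk_eq_top {G : Type*} [Group G] (N : Subgroup G) [N.Normal]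
    {s : Set G} (hs : Subgroup.closure s = ⊤) :
    Subgroup.closure ((↑) '' s : Set (G ⧸ N)) = ⊤ := by
  rw [← QuotientGroup.coe_mk', ← MonoidHom.map_closure, hs,
    Subgroup.map_top_of_surjective _ (QuotientGroup.mk'_surjective N)]

namespace PSL2F7

instance fact_prime_seven : Fact (Nat.Prime 7) := ⟨by norm_num⟩

instance decidableMemCenter : DecidablePred (· ∈ Subgroup.center SL(2, ZMod 7)) := fun _ =>
  decidable_of_iff _ Matrix.SpecialLinearGroup.mem_center_iff.symm

def liftX : SL(2, ZMod 7) := ⟨!![0, 1; -1, 0], by decide⟩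
def liftY : SL(2, ZMod 7) := ⟨!![0, 1; -1, 3], by decide⟩
def liftZ : SL(2, ZMod 7) := ⟨!![-1, -3; 0, -1], by decide⟩

lemma liftX_mul_liftY_mul_liftZ : liftX * liftY * liftZ = 1 := by decide

lemma closure_liftX_liftY_liftZ : Subgroup.closure {liftX, liftY, liftZ} = ⊤ := by
  have hX : liftX ∈ Subgroup.closure {liftX, liftY, liftZ} := Subgroup.subset_closure (by simp)
  have hZ : liftZ ∈ Subgroup.closure {liftX, liftY, liftZ} := Subgroup.subset_closure (by simp)
  have hupper : Matrix.SpecialLinearGroup.transvection zero_ne_one (1 : ZMod 7) =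
      (liftX ^ 2 * liftZ) ^ 5 := by decide
  have hlower : Matrix.SpecialLinearGroup.transvection one_ne_zero (1 : ZMod 7) =
      liftX * ((liftX ^ 2 * liftZ) ^ 5)⁻¹ * liftX⁻¹ := by decide
  rw [eq_top_iff, ← Matrix.SL2.closure_transvection_one_eq_top 7, Subgroup.closure_le,
    Set.insert_subset_iff, Set.singleton_subset_iff, hupper, hlower]
  have hupper_mem := pow_mem (mul_mem (pow_mem hX 2) hZ) 5
  exact ⟨hupper_mem, mul_mem (mul_mem hX (inv_mem hupper_mem)) (inv_mem hX)⟩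

end PSL2F7

open PSL2F7 in
/-- `(0; 2, 4, 7)` is a signature of `PSL(2, 𝔽₇)`. -/
theorem signature_0_2_4_7_PSL2_F7 :
    ∃ x y z : Matrix.ProjectiveSpecialLinearGroup (Fin 2) (ZMod 7),
      orderOf x = 2 ∧ orderOf y = 4 ∧ orderOf z = 7 ∧ x * y * z = 1 ∧
      Subgroup.closure {x, y, z} = ⊤ := by
  refine ⟨liftX, liftY, liftZ, ?_, ?_, ?_, ?_, ?_⟩
  · exact QuotientGroup.orderOf_mk_eq_prime_pow (p := 2) (k := 0) (by decide) (by decide)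
  · exact QuotientGroup.orderOf_mk_eq_prime_pow (p := 2) (k := 1) (by decide) (by decide)
  · exact QuotientGroup.orderOf_mk_eq_prime_pow (p := 7) (k := 0) (by decide) (by decide)
  · rw [← QuotientGroup.mk_mul, ← QuotientGroup.mk_mul, liftX_mul_liftY_mul_liftZ,
      QuotientGroup.mk_one]
  · simpa only [Set.image_insert_eq, Set.image_singleton] using
      QuotientGroup.closure_image_mk_eq_top _ closure_liftX_liftY_liftZ
end

section
/- There exist elements x, y of PSL(2,𝔽₁₁) such that the commutator ⁅x, y⁆ has order exactly 2 and {x, y} generates PSL(2,𝔽₁₁); that is, (1; 2) is a signature of PSL(2,𝔽₁₁). -/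
/-! With `T a = !![1, a; 0, 1]` and `S = !![0, -1; 1, 0]`, the commutator `⁅T a, S⁆` is
`!![a² + 1, a; a, 1]`, of trace `a² + 2`, which vanishes for `a = 3` in `𝔽₁₁`. By Cayley–Hamilton a
trace-zero element of `SL₂` squares to `-1`, and `⁅T 3, S⁆` is not central, so its image in `PSL₂`
has order `2`. Over `𝔽_p`, `SL₂` is generated by transvections, and these are powers of `T a`
(for any `a ≠ 0`) or their conjugates by `S`; so `T 3` and `S` generate `SL₂(𝔽₁₁)`, hence their
images generate `PSL₂(𝔽₁₁)`. -/

open Matrix Matrix.SpecialLinearGroup Subgroup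
open scoped MatrixGroups commutatorElement

namespace Matrix.SL2

variable {R : Type*} [CommRing R]

abbrev T (a : R) : SL(2, R) := SpecialLinearGroup.transvection zero_ne_one a

variable (R) in
def S : SL(2, R) := ⟨!![0, -1; 1, 0], by simp [det_fin_two_of]⟩

lemma coe_T (a : R) : (T a : Matrix (Fin 2) (Fin 2) R) = !![1, a; 0, 1] := by
  ext i j; fin_cases i <;> fin_cases j <;> simp [transvection_coe]

lemma coe_S : (S R : Matrix (Fin 2) (Fin 2) R) = !![0, -1; 1, 0] := rfl

lemma T_nsmul (n : ℕ) (a : R) : T (n • a) = T a ^ n := by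
  induction n with
  | zero => simp [T]
  | succ n ih => rw [succ_nsmul, T, transvection_add, ← T, ih, pow_succ]

lemma transvection_one_zero_eq_conj (c : R) :
    SpecialLinearGroup.transvection one_ne_zero c = S R * T (-c) * (S R)⁻¹ := by
  rw [eq_mul_inv_iff_mul_eq]
  apply Subtype.ext
  rw [SpecialLinearGroup.coe_mul, SpecialLinearGroup.coe_mul, coe_S, coe_T, transvection_coe]
  ext i j
  fin_cases i <;> fin_cases j <;> simp [mul_apply, Fin.sum_univ_two]

lemma coe_commutatorElement_T_S (a : R) :
    ((⁅T a, S R⁆ : SL(2, R)) : Matrix (Fin 2) (Fin 2) R) = !![a ^ 2 + 1, a; a, 1] := by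
  simp [commutatorElement_def, SpecialLinearGroup.coe_mul, SpecialLinearGroup.coe_inv, coe_S,
    coe_T, adjugate_fin_two_of, sq, add_comm]

lemma sq_eq_neg_one_of_trace_eq_zero {A : SL(2, R)}
    (hA : trace (A : Matrix (Fin 2) (Fin 2) R) = 0) : A ^ 2 = -1 := by
  have hdet : A 0 0 * A 1 1 - A 0 1 * A 1 0 = 1 := by rw [← det_fin_two]; exact A.2
  rw [trace_fin_two] at hA
  ext i j
  fin_cases i <;> fin_cases j <;>
    simp only [Fin.zero_eta, Fin.mk_one, sq, SpecialLinearGroup.coe_mul, mul_apply,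
      Fin.sum_univ_two, coe_neg, SpecialLinearGroup.coe_one, neg_apply, one_apply_eq,
      one_apply_ne zero_ne_one, one_apply_ne one_ne_zero, neg_zero]
  · linear_combination -hdet + A 0 0 * hA
  · linear_combination A 0 1 * hA
  · linear_combination A 1 0 * hA
  · linear_combination -hdet + A 1 1 * hA

lemma neg_one_mem_center : (-1 : SL(2, R)) ∈ center SL(2, R) :=
  mem_center_iff.2 ⟨-1, by norm_num, by ext i j; fin_cases i <;> fin_cases j <;> simp⟩

theorem closure_T_S_eq_top {p : ℕ} [Fact p.Prime] {a : ZMod p} (ha : a ≠ 0) :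
    Subgroup.closure {T a, S (ZMod p)} = ⊤ := by
  have hT : ∀ c, T c ∈ Subgroup.closure {T a, S (ZMod p)} := fun c ↦ by
    have : T c = T a ^ (c / a).val := by
      rw [← T_nsmul, nsmul_eq_mul, ZMod.natCast_zmod_val, div_mul_cancel₀ c ha]
    exact this ▸ pow_mem (subset_closure (by simp)) _
  have hS : S (ZMod p) ∈ Subgroup.closure {T a, S (ZMod p)} := subset_closure (by simp)
  refine eq_top_iff.2 fun A _ ↦ transvection_induction _ (fun i j hij c ↦ ?_)
    (fun _ _ ↦ mul_mem) A
  fin_cases i <;> fin_cases j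
  · exact absurd rfl hij
  · exact hT c
  · rw [transvection_one_zero_eq_conj]
    exact mul_mem (mul_mem hS (hT _)) (inv_mem hS)
  · exact absurd rfl hij

end Matrix.SL2

lemma Matrix.SpecialLinearGroup.notMem_center_of_apply_ne_zero {n R : Type*} [Fintype n]
    [DecidableEq n] [CommRing R] {A : SpecialLinearGroup n R} {i j : n} (hij : i ≠ j)
    (hA : A i j ≠ 0) : A ∉ center (SpecialLinearGroup n R) := by
  rintro h
  obtain ⟨r, -, hr⟩ := mem_center_iff.1 h
  exact hA (by rw [← hr]; simp [hij])

lemma QuotientGroup.orderOf_mk_eq_two {G : Type*} [Group G] {N : Subgroup G} [N.Normal] {g : G}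
    (hg : g ∉ N) (hg2 : g ^ 2 ∈ N) : orderOf (g : G ⧸ N) = 2 :=
  orderOf_eq_prime (by rwa [← QuotientGroup.mk_pow, QuotientGroup.eq_one_iff])
    (by rwa [Ne, QuotientGroup.eq_one_iff])

lemma Subgroup.closure_pair_eq_top_of_surjective {G H : Type*} [Group G] [Group H] {f : G →* H}
    (hf : Function.Surjective f) {a b : G} (hab : closure {a, b} = ⊤) :
    closure {f a, f b} = ⊤ := by
  rw [← Set.image_pair, ← MonoidHom.map_closure, hab, map_top_of_surjective f hf]

instance Nat.fact_prime_eleven : Fact (Nat.Prime 11) := ⟨by norm_num⟩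

/-- `(1; 2)` is a signature of `PSL(2, 𝔽₁₁)`: there is a generating pair whose commutator
has order exactly `2`. -/
theorem signature_1_2_PSL2_F11 :
    ∃ x y : Matrix.ProjectiveSpecialLinearGroup (Fin 2) (ZMod 11),
      orderOf ⁅x, y⁆ = 2 ∧ Subgroup.closure {x, y} = ⊤ := by
  let π := QuotientGroup.mk' (center SL(2, ZMod 11))
  have hC : ((⁅SL2.T (3 : ZMod 11), SL2.S _⁆ : SL(2, ZMod 11)) :
      Matrix (Fin 2) (Fin 2) (ZMod 11)) = !![10, 3; 3, 1] := by
    rw [SL2.coe_commutatorElement_T_S]; decide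
  refine ⟨π (SL2.T (3 : ZMod 11)), π (SL2.S _), ?_, closure_pair_eq_top_of_surjective
    (QuotientGroup.mk'_surjective _) (SL2.closure_T_S_eq_top (a := 3) (by decide))⟩
  rw [← map_commutatorElement]
  refine QuotientGroup.orderOf_mk_eq_two
    (notMem_center_of_apply_ne_zero zero_ne_one (by rw [hC]; decide)) ?_
  rw [SL2.sq_eq_neg_one_of_trace_eq_zero (by rw [hC]; decide)]
  exact SL2.neg_one_mem_center
end
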